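/- Let p > d ≥ 1, let U ∈ ℝ^{p×d} and V ∈ ℝ^{p×(p−d)} be such that D = [U, V] ∈ ℝ^{p×p} is orthogonal, let Σ ∈ ℝ^{d×d} be symmetric positive definite, let σ > 0, set Δ = diag(Σ, σ² I_{p−d}), S = D Δ Dᵀ, and D̃ = [U, 0_{p×(p−d)}]. Then for every m ∈ ℝ^d and every y ∈ ℝ^p: U m + (S − σ² I_p) S⁻¹ (y − U m) = U m + D̃ (I_p − σ² Δ⁻¹) D̃ᵀ (y − U m). -/

import Mathlib

/-! Since `D` is orthogonal, `S⁻¹ = D Δ⁻¹ Dᵀ`, hence `(S - σ²I) S⁻¹ = I - σ² S⁻¹ = D (I - σ² Δ⁻¹) Dᵀ`.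
The middle factor `I - σ² Δ⁻¹ = diag(I - σ² Σ⁻¹, 0)` kills the noise block, so the columns `V`
of `D` never contribute and `D` may be replaced by `D̃ = [U, 0]`. -/

open Matrix

namespace Matrix

section Orthogonal

variable {m n R : Type*} [Fintype m] [DecidableEq m] [Fintype n] [DecidableEq n] [CommRing R]
  {D : Matrix m n R} (h₁ : Dᵀ * D = 1) (h₂ : D * Dᵀ = 1) {Δ : Matrix n n R}

include h₁ h₂ in
theorem inv_conj_eq_of_orthogonal (hΔ : IsUnit Δ.det) : (D * Δ * Dᵀ)⁻¹ = D * Δ⁻¹ * Dᵀ := by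
  refine inv_eq_right_inv ?_
  calc D * Δ * Dᵀ * (D * Δ⁻¹ * Dᵀ) = D * (Δ * (Dᵀ * D) * Δ⁻¹) * Dᵀ := by
        simp only [Matrix.mul_assoc]
    _ = 1 := by rw [h₁, Matrix.mul_one, mul_nonsing_inv Δ hΔ, Matrix.mul_one, h₂]

include h₁ h₂ in
theorem conj_sub_smul_one_mul_inv_of_orthogonal (hΔ : IsUnit Δ.det) (c : R) :
    (D * Δ * Dᵀ - c • 1) * (D * Δ * Dᵀ)⁻¹ = D * (1 - c • Δ⁻¹) * Dᵀ :=
  calc (D * Δ * Dᵀ - c • 1) * (D * Δ * Dᵀ)⁻¹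
      = D * (Δ - c • 1) * Dᵀ * (D * Δ⁻¹ * Dᵀ) := by
        rw [inv_conj_eq_of_orthogonal h₁ h₂ hΔ, Matrix.mul_sub D, Matrix.mul_smul,
          Matrix.mul_one, Matrix.sub_mul _ _ Dᵀ, Matrix.smul_mul, h₂]
    _ = D * ((Δ - c • 1) * (Dᵀ * D) * Δ⁻¹) * Dᵀ := by simp only [Matrix.mul_assoc]
    _ = D * (1 - c • Δ⁻¹) * Dᵀ := by
        rw [h₁, Matrix.mul_one, Matrix.sub_mul, mul_nonsing_inv Δ hΔ, Matrix.smul_mul,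
          Matrix.one_mul]

end Orthogonal

theorem fromCols_mul_fromBlocks_zero_mul_transpose {m n o R : Type*} [Fintype n] [Fintype o]
    [CommRing R] (U U' : Matrix m n R) (V W : Matrix m o R) (A : Matrix n n R) :
    fromCols U V * fromBlocks A 0 0 (0 : Matrix o o R) * (fromCols U' W)ᵀ = U * A * U'ᵀ := by
  rw [transpose_fromCols, fromCols_mul_fromBlocks, fromCols_mul_fromRows]
  simp

theorem one_sub_smul_inv_fromBlocks_smul_one {m n 𝕜 : Type*} [Fintype m] [DecidableEq m]
    [Fintype n] [DecidableEq n] [Field 𝕜] {A : Matrix m m 𝕜} (hA : IsUnit A.det) {c : 𝕜}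
    (hc : c ≠ 0) :
    1 - c • (fromBlocks A 0 0 (c • 1 : Matrix n n 𝕜))⁻¹ = fromBlocks (1 - c • A⁻¹) 0 0 0 := by
  have hc1 : (c • 1 : Matrix n n 𝕜) * c⁻¹ • 1 = 1 := by simp [smul_smul, hc]
  have hcA : IsUnit A ↔ IsUnit (c • 1 : Matrix n n 𝕜) :=
    iff_of_true ((isUnit_iff_isUnit_det A).mpr hA) (IsUnit.of_mul_eq_one _ hc1)
  rw [inv_fromBlocks_zero₁₂_of_isUnit_iff _ _ _ hcA, inv_eq_right_inv hc1]
  ext (i | i) (j | j) <;> simp [one_apply, hc]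

end Matrix

theorem bdlm_patch_expectation_general (p d : ℕ)
    (U : Matrix (Fin p) (Fin d) ℝ) (V : Matrix (Fin p) (Fin (p - d)) ℝ)
    (Sig : Matrix (Fin d) (Fin d) ℝ) (hSig : Sig.PosDef)
    (σ : ℝ) (hσ : 0 < σ)
    (D : Matrix (Fin p) (Fin d ⊕ Fin (p - d)) ℝ) (hD : D = fromCols U V)
    (horth₁ : Dᵀ * D = 1) (horth₂ : D * Dᵀ = 1)
    (Δ : Matrix (Fin d ⊕ Fin (p - d)) (Fin d ⊕ Fin (p - d)) ℝ)
    (hΔ : Δ = fromBlocks Sig 0 0 (σ ^ 2 • 1))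
    (S : Matrix (Fin p) (Fin p) ℝ) (hS : S = D * Δ * Dᵀ)
    (Dt : Matrix (Fin p) (Fin d ⊕ Fin (p - d)) ℝ) (hDt : Dt = fromCols U 0) :
    ∀ (m : Fin d → ℝ) (y : Fin p → ℝ),
      U *ᵥ m + ((S - σ ^ 2 • 1) * S⁻¹) *ᵥ (y - U *ᵥ m)
        = U *ᵥ m + (Dt * ((1 : Matrix (Fin d ⊕ Fin (p - d)) (Fin d ⊕ Fin (p - d)) ℝ)
            - σ ^ 2 • Δ⁻¹) * Dtᵀ) *ᵥ (y - U *ᵥ m) := by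
  have hσ2 : σ ^ 2 ≠ 0 := pow_ne_zero 2 hσ.ne'
  have hSig_det : IsUnit Sig.det := hSig.isUnit.map detMonoidHom
  have hΔ_det : IsUnit Δ.det := by
    rw [hΔ, det_fromBlocks_zero₂₁, det_smul, det_one, mul_one]
    exact hSig_det.mul (IsUnit.mk0 _ (pow_ne_zero _ hσ2))
  have hblocks : 1 - σ ^ 2 • Δ⁻¹ = fromBlocks (1 - σ ^ 2 • Sig⁻¹) 0 0 0 := by
    rw [hΔ, one_sub_smul_inv_fromBlocks_smul_one hSig_det hσ2]
  intro m y
  rw [hS, conj_sub_smul_one_mul_inv_of_orthogonal horth₁ horth₂ hΔ_det, hblocks, hD, hDt,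
    fromCols_mul_fromBlocks_zero_mul_transpose, fromCols_mul_fromBlocks_zero_mul_transpose]

/-- The conditional patch expectation in the BDLM denoising model:
`Um + (S − σ²I) S⁻¹ (y − Um) = Um + D̃ (I − σ² Δ⁻¹) D̃ᵀ (y − Um)`. -/
theorem bdlm_patch_expectation (p d : ℕ) (hd : 1 ≤ d) (hdp : d < p)
    (U : Matrix (Fin p) (Fin d) ℝ) (V : Matrix (Fin p) (Fin (p - d)) ℝ)
    (Sig : Matrix (Fin d) (Fin d) ℝ) (hSig : Sig.PosDef)
    (σ : ℝ) (hσ : 0 < σ)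
    (D : Matrix (Fin p) (Fin d ⊕ Fin (p - d)) ℝ) (hD : D = fromCols U V)
    (horth₁ : Dᵀ * D = 1) (horth₂ : D * Dᵀ = 1)
    (Δ : Matrix (Fin d ⊕ Fin (p - d)) (Fin d ⊕ Fin (p - d)) ℝ)
    (hΔ : Δ = fromBlocks Sig 0 0 (σ ^ 2 • 1))
    (S : Matrix (Fin p) (Fin p) ℝ) (hS : S = D * Δ * Dᵀ)
    (Dt : Matrix (Fin p) (Fin d ⊕ Fin (p - d)) ℝ) (hDt : Dt = fromCols U 0) :
    ∀ (m : Fin d → ℝ) (y : Fin p → ℝ),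
      U *ᵥ m + ((S - σ ^ 2 • 1) * S⁻¹) *ᵥ (y - U *ᵥ m)
        = U *ᵥ m + (Dt * ((1 : Matrix (Fin d ⊕ Fin (p - d)) (Fin d ⊕ Fin (p - d)) ℝ)
            - σ ^ 2 • Δ⁻¹) * Dtᵀ) *ᵥ (y - U *ᵥ m) :=
  bdlm_patch_expectation_general p d U V Sig hSig σ hσ D hD horth₁ horth₂ Δ hΔ S hS Dt hDt
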